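/- arXiv:1603.06709 — 2 statements merged into one kernel-verified Lean document; each statement's English description precedes it below -/
import Mathlib

section
/- For every p ∈ (1,∞), setting p* = p/(p−1), and for every x ∈ [0, π_{p*,p}/2] (which equals [0, 2^{−2/p}·π_{2,p}]), one has the multiple-angle formula sin_{2,p}(2^{2/p}·x) = 2^{2/p}·sin_{p*,p}(x)·(cos_{p*,p}(x))^{p*−1}. -/
/-!
Write `s = sin_{p*,p} x`, so that `x = sin_{p*,p}⁻¹ s` and
`cos_{p*,p}(x)^{p*-1} = (1 - s^p)^{1/p}`. For `φ(s) = 2^{2/p} s (1 - s^p)^{1/p}` one has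
`1 - φ(s)^p = (1 - 2 s^p)^2`, and differentiating shows
`sin_{2,p}⁻¹ (φ s) = 2^{2/p} sin_{p*,p}⁻¹ s` as long as `s^p ≤ 1/2`. The involution
`s ↦ (1 - s^p)^{1/p}` leaves `φ` invariant and satisfies
`sin_{p*,p}⁻¹ s + sin_{p*,p}⁻¹ ((1 - s^p)^{1/p}) = π_{p*,p}/2` (again by differentiating,
using `1/p + 1/p* = 1`). This handles `s^p ≥ 1/2`, where `2^{2/p} x` lies beyond `π_{2,p}/2`
and `sin_{2,p}` is reflected, and at the fixed point `s = 2^{-1/p}` gives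
`π_{2,p} = 2^{2/p} π_{p*,p}/2`.
-/

open Real Set MeasureTheory Filter

/-- `sin_{p,q}^{-1}(x) = ∫₀ˣ (1-t^q)^{-1/p} dt`. -/
noncomputable def arcsinpq (p q x : ℝ) : ℝ := ∫ t in (0:ℝ)..x, (1 - t ^ q) ^ (-(1 / p))

/-- The generalized π: `π_{p,q} = 2 sin_{p,q}^{-1}(1)`. -/
noncomputable def pipq (p q : ℝ) : ℝ := 2 * arcsinpq p q 1

/-- `sin_{p,q}` on `[0, π_{p,q}/2]`, as the inverse of `arcsinpq p q : [0,1] → [0, π_{p,q}/2]`. -/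
noncomputable def sinHalf (p q : ℝ) : ℝ → ℝ := Function.invFunOn (arcsinpq p q) (Set.Icc 0 1)

/-- `sin_{p,q}` on all of `ℝ`: extended to `[π_{p,q}/2, π_{p,q}]` by `sin_{p,q}(π_{p,q}-x)` and
then to `ℝ` as the odd `2π_{p,q}`-periodic continuation. -/
noncomputable def sinpq (p q x : ℝ) : ℝ :=
  let T := pipq p q
  let y := x - 2 * T * (⌊(x + T) / (2 * T)⌋ : ℝ)
  if y < 0 then -(sinHalf p q (if -y ≤ T / 2 then -y else T + y))
  else sinHalf p q (if y ≤ T / 2 then y else T - y)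

/-- `cos_{p,q} = (sin_{p,q})'`. -/
noncomputable def cospq (p q : ℝ) : ℝ → ℝ := deriv (sinpq p q)

/-- Rising factorial (Pochhammer symbol) `(a)_n = a(a+1)⋯(a+n-1)`. -/
noncomputable def poch (a : ℝ) (n : ℕ) : ℝ := ∏ i ∈ Finset.range n, (a + i)

open Topology intervalIntegral

section ArcsinIntegrand

variable {p q t : ℝ}

lemma one_sub_rpow_pos (hq : 0 < q) (ht : t ∈ Ico 0 1) : 0 < 1 - t ^ q :=
  sub_pos.2 (rpow_lt_one ht.1 ht.2 hq)

lemma continuousOn_arcsin_integrand (hq : 0 < q) :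
    ContinuousOn (fun t : ℝ => (1 - t ^ q) ^ (-(1 / p))) (Ico 0 1) :=
  (continuousOn_const.sub (continuousOn_id.rpow_const fun _ _ => Or.inr hq.le)).rpow_const
    fun _ ht => Or.inl (one_sub_rpow_pos hq ht).ne'

lemma arcsin_integrand_le (hp : 0 < p) (hq : 1 ≤ q) (ht : t ∈ Icc 0 1) :
    (1 - t ^ q) ^ (-(1 / p)) ≤ (1 - t) ^ (-(1 / p)) := by
  obtain rfl | ht1 := ht.2.eq_or_lt
  · simp
  obtain rfl | ht0 := ht.1.eq_or_lt
  · simp [zero_rpow (by linarith : q ≠ 0)]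
  have htq : t ^ q ≤ t := by simpa using rpow_le_rpow_of_exponent_ge ht0 ht.2 hq
  exact rpow_le_rpow_of_nonpos (by linarith) (by linarith) (by simp [hp.le])

lemma intervalIntegrable_arcsin_integrand (hp : 1 < p) (hq : 1 ≤ q) :
    IntervalIntegrable (fun t : ℝ => (1 - t ^ q) ^ (-(1 / p))) volume 0 1 := by
  have hexp : -1 < -(1 / p) := by
    have : 1 / p < 1 := (div_lt_one (by linarith)).2 hp
    linarith
  have hdom : IntervalIntegrable (fun t : ℝ => (1 - t) ^ (-(1 / p))) volume 0 1 := by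
    simpa using (intervalIntegrable_rpow' (a := 1) (b := 0) hexp).comp_sub_left 1
  refine hdom.mono_fun
    ((measurable_const.sub (measurable_id.pow_const q)).pow_const _).aestronglyMeasurable ?_
  filter_upwards [ae_restrict_mem measurableSet_uIoc] with t ht
  rw [uIoc_of_le zero_le_one] at ht
  have h1 : 0 ≤ 1 - t ^ q := sub_nonneg.2 (rpow_le_one ht.1.le ht.2 (by linarith))
  rw [norm_of_nonneg (rpow_nonneg h1 _), norm_of_nonneg (rpow_nonneg (by linarith [ht.2]) _)]
  exact arcsin_integrand_le (by linarith) hq ⟨ht.1.le, ht.2⟩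

end ArcsinIntegrand

section GeneralizedSine

variable {p q x y : ℝ}

lemma arcsinpq_zero : arcsinpq p q 0 = 0 := integral_same

lemma arcsinpq_one : arcsinpq p q 1 = pipq p q / 2 := by
  rw [pipq]; ring

lemma hasDerivAt_arcsinpq (hq : 0 < q) (hy : y ∈ Ioo 0 1) :
    HasDerivAt (arcsinpq p q) ((1 - y ^ q) ^ (-(1 / p))) y := by
  have hcont := continuousOn_arcsin_integrand (p := p) hq
  exact integral_hasDerivAt_right
    ((hcont.mono (Icc_subset_Ico_right hy.2)).intervalIntegrable_of_Icc hy.1.le)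
    ((hcont.mono Ioo_subset_Ico_self).stronglyMeasurableAtFilter isOpen_Ioo y hy)
    (hcont.continuousAt (Ico_mem_nhds hy.1 hy.2))

variable (hp : 1 < p) (hq : 1 ≤ q)
include hp hq

lemma intervalIntegrable_arcsin_integrand_of_mem (hx : x ∈ Icc 0 1) (hy : y ∈ Icc 0 1) :
    IntervalIntegrable (fun t : ℝ => (1 - t ^ q) ^ (-(1 / p))) volume x y :=
  (intervalIntegrable_arcsin_integrand hp hq).mono_set <| by
    rw [uIcc_of_le zero_le_one]; exact uIcc_subset_Icc hx hy

lemma continuousOn_arcsinpq : ContinuousOn (arcsinpq p q) (Icc 0 1) := by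
  have := continuousOn_primitive_interval' (intervalIntegrable_arcsin_integrand hp hq)
    (left_mem_uIcc (b := 1))
  rwa [uIcc_of_le zero_le_one] at this

lemma strictMonoOn_arcsinpq : StrictMonoOn (arcsinpq p q) (Icc 0 1) := by
  intro x hx y hy hxy
  have hpos : 0 < ∫ t in x..y, (1 - t ^ q) ^ (-(1 / p)) :=
    intervalIntegral_pos_of_pos_on (intervalIntegrable_arcsin_integrand_of_mem hp hq hx hy)
      (fun t ht => rpow_pos_of_pos
        (one_sub_rpow_pos (by linarith) ⟨hx.1.trans ht.1.le, ht.2.trans_le hy.2⟩) _) hxy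
  have hadd := integral_add_adjacent_intervals
    (intervalIntegrable_arcsin_integrand_of_mem hp hq (left_mem_Icc.2 zero_le_one) hx)
    (intervalIntegrable_arcsin_integrand_of_mem hp hq hx hy)
  rw [arcsinpq, arcsinpq, ← hadd]
  linarith

lemma pipq_pos : 0 < pipq p q := by
  have := strictMonoOn_arcsinpq hp hq (left_mem_Icc.2 zero_le_one) (right_mem_Icc.2 zero_le_one)
    zero_lt_one
  rw [arcsinpq_zero, arcsinpq_one] at this
  linarith

lemma bijOn_arcsinpq : BijOn (arcsinpq p q) (Icc 0 1) (Icc 0 (pipq p q / 2)) := by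
  have himage : arcsinpq p q '' Icc 0 1 = Icc 0 (pipq p q / 2) := by
    rw [(continuousOn_arcsinpq hp hq).image_Icc_of_monotoneOn zero_le_one
      (strictMonoOn_arcsinpq hp hq).monotoneOn, arcsinpq_zero, arcsinpq_one]
  exact himage ▸ (strictMonoOn_arcsinpq hp hq).injOn.bijOn_image

lemma invOn_sinHalf : InvOn (sinHalf p q) (arcsinpq p q) (Icc 0 1) (Icc 0 (pipq p q / 2)) :=
  (bijOn_arcsinpq hp hq).invOn_invFunOn

lemma bijOn_sinHalf : BijOn (sinHalf p q) (Icc 0 (pipq p q / 2)) (Icc 0 1) :=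
  (bijOn_arcsinpq hp hq).symm (invOn_sinHalf hp hq).symm

lemma mapsTo_sinHalf : MapsTo (sinHalf p q) (Icc 0 (pipq p q / 2)) (Icc 0 1) :=
  (bijOn_sinHalf hp hq).mapsTo

lemma sinHalf_zero : sinHalf p q 0 = 0 := by
  simpa [arcsinpq_zero] using (invOn_sinHalf hp hq).1 (left_mem_Icc.2 zero_le_one)

lemma sinHalf_pipq_div_two : sinHalf p q (pipq p q / 2) = 1 := by
  simpa [arcsinpq_one] using (invOn_sinHalf hp hq).1 (right_mem_Icc.2 zero_le_one)

lemma strictMonoOn_sinHalf : StrictMonoOn (sinHalf p q) (Icc 0 (pipq p q / 2)) := by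
  intro x hx y hy hxy
  rwa [← (strictMonoOn_arcsinpq hp hq).lt_iff_lt (mapsTo_sinHalf hp hq hx)
    (mapsTo_sinHalf hp hq hy), (invOn_sinHalf hp hq).2 hx, (invOn_sinHalf hp hq).2 hy]

lemma hasDerivAt_sinHalf (hx : x ∈ Ioo 0 (pipq p q / 2)) :
    HasDerivAt (sinHalf p q) ((1 - sinHalf p q x ^ q) ^ (1 / p)) x := by
  have hxI : x ∈ Icc 0 (pipq p q / 2) := Ioo_subset_Icc_self hx
  have hT := half_pos (pipq_pos hp hq)
  have hs : sinHalf p q x ∈ Ioo 0 1 := by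
    have h0 := strictMonoOn_sinHalf hp hq (left_mem_Icc.2 hT.le) hxI hx.1
    have h1 := strictMonoOn_sinHalf hp hq hxI (right_mem_Icc.2 hT.le) hx.2
    rw [sinHalf_zero hp hq] at h0
    rw [sinHalf_pipq_div_two hp hq] at h1
    exact ⟨h0, h1⟩
  have hcont : ContinuousAt (sinHalf p q) x :=
    (strictMonoOn_sinHalf hp hq).continuousAt_of_image_mem_nhds (Icc_mem_nhds hx.1 hx.2)
      ((bijOn_sinHalf hp hq).image_eq ▸ Icc_mem_nhds hs.1 hs.2)
  have hinv : ∀ᶠ y in 𝓝 x, arcsinpq p q (sinHalf p q y) = y := by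
    filter_upwards [Icc_mem_nhds hx.1 hx.2] with y hy using (invOn_sinHalf hp hq).2 hy
  have hpos : 0 < 1 - sinHalf p q x ^ q := one_sub_rpow_pos (by linarith) ⟨hs.1.le, hs.2⟩
  simpa [rpow_neg hpos.le] using HasDerivAt.of_local_left_inverse hcont
    (hasDerivAt_arcsinpq (by linarith) hs) (rpow_pos_of_pos hpos _).ne' hinv

lemma sinpq_eq_sinHalf_min (hx : x ∈ Icc 0 (pipq p q)) :
    sinpq p q x = sinHalf p q (min x (pipq p q - x)) := by
  have hT := pipq_pos hp hq
  obtain hxT | rfl := hx.2.lt_or_eq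
  · have hfl : ⌊(x + pipq p q) / (2 * pipq p q)⌋ = 0 :=
      Int.floor_eq_zero_iff.2 ⟨by have := hx.1; positivity,
        by rw [div_lt_one (by positivity)]; linarith⟩
    simp only [sinpq, hfl, Int.cast_zero, mul_zero, sub_zero, if_neg (not_lt.2 hx.1)]
    split_ifs with h
    · rw [min_eq_left (by linarith)]
    · rw [min_eq_right (by linarith)]
  · have hfl : ⌊(pipq p q + pipq p q) / (2 * pipq p q)⌋ = 1 := by
      rw [← two_mul, div_self (by positivity), Int.floor_one]
    simp only [sinpq, hfl, Int.cast_one, mul_one, sub_self, min_eq_right hT.le]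
    rw [if_pos (by linarith), if_neg (by linarith), show pipq p q + (pipq p q - 2 * pipq p q) = 0
      by ring, sinHalf_zero hp hq, neg_zero]

lemma sinpq_eq_sinHalf (hx : x ∈ Icc 0 (pipq p q / 2)) : sinpq p q x = sinHalf p q x := by
  have hT := pipq_pos hp hq
  rw [sinpq_eq_sinHalf_min hp hq ⟨hx.1, by linarith [hx.2]⟩, min_eq_left (by linarith [hx.2])]

lemma sinpq_zero : sinpq p q 0 = 0 := by
  rw [sinpq_eq_sinHalf hp hq (left_mem_Icc.2 (half_pos (pipq_pos hp hq)).le), sinHalf_zero hp hq]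

lemma arcsinpq_sinpq (hx : x ∈ Icc 0 (pipq p q / 2)) : arcsinpq p q (sinpq p q x) = x := by
  rw [sinpq_eq_sinHalf hp hq hx]
  exact (invOn_sinHalf hp hq).2 hx

lemma sinpq_mem_Icc (hx : x ∈ Icc 0 (pipq p q / 2)) : sinpq p q x ∈ Icc 0 1 := by
  rw [sinpq_eq_sinHalf hp hq hx]
  exact mapsTo_sinHalf hp hq hx

lemma cospq_eq (hx : x ∈ Ioo 0 (pipq p q / 2)) :
    cospq p q x = (1 - sinpq p q x ^ q) ^ (1 / p) := by
  have hd := hasDerivAt_sinHalf hp hq hx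
  rw [← sinpq_eq_sinHalf hp hq (Ioo_subset_Icc_self hx)] at hd
  refine (hd.congr_of_eventuallyEq ?_).deriv
  filter_upwards [Ioo_mem_nhds hx.1 hx.2] with y hy
  exact sinpq_eq_sinHalf hp hq (Ioo_subset_Icc_self hy)

lemma isLocalMax_sinpq_pipq_div_two : IsLocalMax (sinpq p q) (pipq p q / 2) := by
  have hT := pipq_pos hp hq
  filter_upwards [Icc_mem_nhds (half_pos hT) (half_lt_self hT)] with y hy
  have hmin : min y (pipq p q - y) ∈ Icc 0 (pipq p q / 2) := by
    refine ⟨le_min hy.1 (by linarith [hy.2]), ?_⟩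
    rcases le_total y (pipq p q / 2) with h | h
    exacts [(min_le_left _ _).trans h, (min_le_right _ _).trans (by linarith)]
  rw [sinpq_eq_sinHalf_min hp hq hy, sinpq_eq_sinHalf hp hq (right_mem_Icc.2 (half_pos hT).le),
    sinHalf_pipq_div_two hp hq]
  exact (mapsTo_sinHalf hp hq hmin).2

lemma cospq_pipq_div_two : cospq p q (pipq p q / 2) = 0 :=
  (isLocalMax_sinpq_pipq_div_two hp hq).deriv_eq_zero

end GeneralizedSine

noncomputable def pCompl (p s : ℝ) : ℝ := (1 - s ^ p) ^ (1 / p)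

noncomputable def doublingMap (p s : ℝ) : ℝ := 2 ^ (2 / p) * s * pCompl p s

section PCompl

variable {p s : ℝ} (hp : 0 < p)
include hp

lemma one_sub_rpow_mem_Icc (hs : s ∈ Icc 0 1) : 1 - s ^ p ∈ Icc 0 1 :=
  ⟨sub_nonneg.2 (rpow_le_one hs.1 hs.2 hp.le), sub_le_self _ (rpow_nonneg hs.1 _)⟩

lemma pCompl_mem_Icc (hs : s ∈ Icc 0 1) : pCompl p s ∈ Icc 0 1 :=
  have h := one_sub_rpow_mem_Icc hp hs
  ⟨rpow_nonneg h.1 _, rpow_le_one h.1 h.2 (by positivity)⟩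

lemma pCompl_mem_Ioo (hs : s ∈ Ioo 0 1) : pCompl p s ∈ Ioo 0 1 := by
  have hpos := one_sub_rpow_pos hp ⟨hs.1.le, hs.2⟩
  exact ⟨rpow_pos_of_pos hpos _,
    rpow_lt_one hpos.le (sub_lt_self _ (rpow_pos_of_pos hs.1 _)) (by positivity)⟩

lemma pCompl_rpow (hs : s ∈ Icc 0 1) : pCompl p s ^ p = 1 - s ^ p := by
  rw [pCompl, one_div, rpow_inv_rpow (one_sub_rpow_mem_Icc hp hs).1 hp.ne']

lemma pCompl_pCompl (hs : s ∈ Icc 0 1) : pCompl p (pCompl p s) = s := by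
  rw [pCompl, pCompl_rpow hp hs, sub_sub_cancel, one_div, rpow_rpow_inv hs.1 hp.ne']

lemma pCompl_one : pCompl p 1 = 0 := by simp [pCompl, hp.ne']

lemma le_pCompl_iff (hs : s ∈ Icc 0 1) : s ≤ pCompl p s ↔ s ^ p ≤ 1 / 2 := by
  rw [← rpow_le_rpow_iff hs.1 (pCompl_mem_Icc hp hs).1 hp, pCompl_rpow hp hs]
  constructor <;> intro <;> linarith

lemma continuous_pCompl : Continuous (pCompl p) :=
  (continuous_const.sub (continuous_id.rpow_const fun _ => Or.inr hp.le)).rpow_const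
    fun _ => Or.inr (by positivity)

lemma hasDerivAt_pCompl (hs : s ∈ Ioo 0 1) :
    HasDerivAt (pCompl p) (-(s ^ (p - 1)) * (1 - s ^ p) ^ (1 / p - 1)) s := by
  have hpos := one_sub_rpow_pos hp ⟨hs.1.le, hs.2⟩
  refine (((hasDerivAt_rpow_const (Or.inl hs.1.ne')).const_sub 1).rpow_const
    (p := 1 / p) (Or.inl hpos.ne')).congr_deriv ?_
  field_simp

lemma doublingMap_rpow (hs : s ∈ Icc 0 1) :
    doublingMap p s ^ p = 4 * (s ^ p * (1 - s ^ p)) := by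
  have h4 : ((2 : ℝ) ^ (2 / p)) ^ p = 4 := by
    rw [← rpow_mul zero_le_two, div_mul_cancel₀ _ hp.ne']; norm_num
  rw [doublingMap, mul_rpow (mul_nonneg (by positivity) hs.1) (pCompl_mem_Icc hp hs).1,
    mul_rpow (by positivity) hs.1, h4, pCompl_rpow hp hs, mul_assoc]

lemma one_sub_doublingMap_rpow (hs : s ∈ Icc 0 1) :
    1 - doublingMap p s ^ p = (1 - 2 * s ^ p) ^ 2 := by
  rw [doublingMap_rpow hp hs]; ring

lemma doublingMap_nonneg (hs : s ∈ Icc 0 1) : 0 ≤ doublingMap p s :=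
  mul_nonneg (mul_nonneg (by positivity) hs.1) (pCompl_mem_Icc hp hs).1

lemma doublingMap_mem_Icc (hs : s ∈ Icc 0 1) : doublingMap p s ∈ Icc 0 1 := by
  refine ⟨doublingMap_nonneg hp hs, ?_⟩
  rw [← rpow_le_rpow_iff (doublingMap_nonneg hp hs) zero_le_one hp, one_rpow]
  nlinarith [one_sub_doublingMap_rpow hp hs]

lemma doublingMap_lt_one (hs : s ∈ Icc 0 1) (hs2 : s ^ p < 1 / 2) : doublingMap p s < 1 := by
  rw [← rpow_lt_rpow_iff (doublingMap_nonneg hp hs) zero_le_one hp, one_rpow]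
  nlinarith [one_sub_doublingMap_rpow hp hs]

lemma doublingMap_pCompl (hs : s ∈ Icc 0 1) : doublingMap p (pCompl p s) = doublingMap p s := by
  rw [doublingMap, doublingMap, pCompl_pCompl hp hs]; ring

lemma hasDerivAt_doublingMap (hs : s ∈ Ioo 0 1) :
    HasDerivAt (doublingMap p)
      (2 ^ (2 / p) * (pCompl p s + s * (-(s ^ (p - 1)) * (1 - s ^ p) ^ (1 / p - 1)))) s := by
  have h := ((hasDerivAt_id' s).mul (hasDerivAt_pCompl hp hs)).const_mul ((2 : ℝ) ^ (2 / p))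
  refine (h.congr_deriv (by ring)).congr_of_eventuallyEq (Eventually.of_forall fun y => ?_)
  simp [doublingMap, mul_assoc]

end PCompl

lemma eq_of_hasDerivAt_zero {f : ℝ → ℝ} {a b : ℝ} (hab : a ≤ b)
    (hf : ContinuousOn f (Icc a b)) (hf' : ∀ x ∈ Ioo a b, HasDerivAt f 0 x) : f b = f a := by
  obtain rfl | hab := hab.eq_or_lt
  · rfl
  obtain ⟨c, -, hc⟩ := exists_hasDerivAt_eq_slope f (fun _ => 0) hab hf hf'
  rw [eq_comm, div_eq_zero_iff, sub_eq_zero] at hc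
  exact hc.resolve_right (sub_ne_zero.2 hab.ne')

section HolderConjugate

variable {r p s x : ℝ} (h : r.HolderConjugate p)
include h

lemma neg_one_div_eq_one_div_sub_one : -(1 / r) = 1 / p - 1 := by
  rw [one_div, one_div, ← h.one_sub_inv]; ring

lemma arcsinpq_add_arcsinpq_pCompl (hs : s ∈ Icc 0 1) :
    arcsinpq r p s + arcsinpq r p (pCompl p s) = pipq r p / 2 := by
  have hr := h.lt
  have hp := h.symm.lt
  have hp0 : 0 < p := by linarith
  have hexp := neg_one_div_eq_one_div_sub_one h
  let H t := arcsinpq r p t + arcsinpq r p (pCompl p t)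
  have hcont : ContinuousOn H (Icc s 1) :=
    ((continuousOn_arcsinpq hr hp.le).add ((continuousOn_arcsinpq hr hp.le).comp
      (continuous_pCompl hp0).continuousOn fun t => pCompl_mem_Icc hp0)).mono
      (Icc_subset_Icc_left hs.1)
  have hderiv : ∀ t ∈ Ioo s 1, HasDerivAt H 0 t := by
    intro t ht
    have ht0 : t ∈ Ioo 0 1 := ⟨hs.1.trans_lt ht.1, ht.2⟩
    refine ((hasDerivAt_arcsinpq hp0 ht0).add ((hasDerivAt_arcsinpq hp0
      (pCompl_mem_Ioo hp0 ht0)).comp t (hasDerivAt_pCompl hp0 ht0))).congr_deriv ?_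
    have e1 : (1 - pCompl p t ^ p) ^ (-(1 / r)) = t ^ (1 - p) := by
      rw [pCompl_rpow hp0 ⟨ht0.1.le, ht0.2.le⟩, sub_sub_cancel, ← rpow_mul ht0.1.le, hexp]
      congr 1
      field_simp
    have e2 : t ^ (1 - p) * t ^ (p - 1) = 1 := by
      rw [← rpow_add ht0.1]; simp
    rw [e1, hexp]
    linear_combination (-(1 - t ^ p) ^ (1 / p - 1)) * e2
  simpa [H, pCompl_one hp0, arcsinpq_zero, arcsinpq_one] using
    (eq_of_hasDerivAt_zero hs.2 hcont hderiv).symm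

lemma arcsinpq_two_doublingMap (hs : s ∈ Icc 0 1) (hs2 : s ^ p ≤ 1 / 2) :
    arcsinpq 2 p (doublingMap p s) = 2 ^ (2 / p) * arcsinpq r p s := by
  have hr := h.lt
  have hp := h.symm.lt
  have hp0 : 0 < p := by linarith
  have hexp := neg_one_div_eq_one_div_sub_one h
  let G t := arcsinpq 2 p (doublingMap p t) - 2 ^ (2 / p) * arcsinpq r p t
  have hsub : Icc 0 s ⊆ Icc 0 1 := Icc_subset_Icc_right hs.2
  have hcont : ContinuousOn G (Icc 0 s) :=
    ((continuousOn_arcsinpq one_lt_two hp.le).comp ((continuous_const.mul continuous_id).mul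
      (continuous_pCompl hp0)).continuousOn fun t ht => doublingMap_mem_Icc hp0 (hsub ht)).sub
      (continuousOn_const.mul ((continuousOn_arcsinpq hr hp.le).mono hsub))
  have hderiv : ∀ t ∈ Ioo 0 s, HasDerivAt G 0 t := by
    intro t ht
    have ht1 : t ∈ Ioo 0 1 := ⟨ht.1, ht.2.trans_le hs.2⟩
    have htI : t ∈ Icc 0 1 := Ioo_subset_Icc_self ht1
    have ht2 : t ^ p < 1 / 2 := (rpow_lt_rpow ht.1.le ht.2 hp0).trans_le hs2
    have hφ : doublingMap p t ∈ Ioo 0 1 :=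
      ⟨mul_pos (mul_pos (by positivity) ht.1) (pCompl_mem_Ioo hp0 ht1).1,
        doublingMap_lt_one hp0 htI ht2⟩
    refine (((hasDerivAt_arcsinpq hp0 hφ).comp t
      (hasDerivAt_doublingMap hp0 ht1)).sub
      ((hasDerivAt_arcsinpq hp0 ht1).const_mul _)).congr_deriv ?_
    have hu : 0 < 1 - 2 * t ^ p := by linarith
    have e1 : (1 - doublingMap p t ^ p) ^ (-(1 / 2 : ℝ)) = (1 - 2 * t ^ p)⁻¹ := by
      rw [one_sub_doublingMap_rpow hp0 htI, ← rpow_natCast, ← rpow_mul hu.le]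
      norm_num [rpow_neg_one]
    have e2 : pCompl p t + t * (-(t ^ (p - 1)) * (1 - t ^ p) ^ (1 / p - 1))
        = (1 - 2 * t ^ p) * (1 - t ^ p) ^ (1 / p - 1) := by
      have hpos := one_sub_rpow_pos hp0 ⟨ht.1.le, ht1.2⟩
      have hψ : pCompl p t = (1 - t ^ p) ^ (1 / p - 1) * (1 - t ^ p) := by
        rw [rpow_sub_one hpos.ne', div_mul_cancel₀ _ hpos.ne', pCompl]
      have ht' : t * t ^ (p - 1) = t ^ p := by
        rw [rpow_sub_one ht.1.ne', mul_div_cancel₀ _ ht.1.ne']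
      rw [hψ]
      linear_combination (-(1 - t ^ p) ^ (1 / p - 1)) * ht'
    rw [e1, e2, hexp]
    field_simp
    ring
  simpa [G, doublingMap, arcsinpq_zero, sub_eq_zero] using
    eq_of_hasDerivAt_zero hs.1 hcont hderiv

lemma pipq_two_eq : pipq 2 p = 2 ^ (2 / p) * (pipq r p / 2) := by
  have hp0 : 0 < p := h.symm.pos
  set b : ℝ := (1 / 2) ^ (1 / p) with hb_def
  have hb : b ∈ Icc 0 1 :=
    ⟨by positivity, rpow_le_one (by norm_num) (by norm_num) (by positivity)⟩
  have hbp : b ^ p = 1 / 2 := by rw [hb_def, one_div p, rpow_inv_rpow (by norm_num) hp0.ne']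
  have hψb : pCompl p b = b := by rw [pCompl, hbp, hb_def]; norm_num
  have hφb : doublingMap p b = 1 := by
    have h1 : doublingMap p b ^ p = 1 := by rw [doublingMap_rpow hp0 hb, hbp]; norm_num
    rw [← rpow_rpow_inv (doublingMap_nonneg hp0 hb) hp0.ne', h1, one_rpow]
  have hA := arcsinpq_add_arcsinpq_pCompl h hb
  rw [hψb] at hA
  rw [pipq, ← hφb, arcsinpq_two_doublingMap h hb hbp.le, ← hA]
  ring

lemma arcsinpq_two_doublingMap_eq_min (hs : s ∈ Icc 0 1) :
    arcsinpq 2 p (doublingMap p s) =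
      min (2 ^ (2 / p) * arcsinpq r p s) (pipq 2 p - 2 ^ (2 / p) * arcsinpq r p s) := by
  have hp0 : 0 < p := h.symm.pos
  have hmono := strictMonoOn_arcsinpq h.lt h.symm.lt.le
  have hψ := pCompl_mem_Icc hp0 hs
  rw [pipq_two_eq h, ← arcsinpq_add_arcsinpq_pCompl h hs, mul_add, add_sub_cancel_left,
    ← mul_min_of_nonneg _ _ (by positivity)]
  rcases le_total s (pCompl p s) with hle | hle
  · rw [min_eq_left ((hmono.le_iff_le hs hψ).2 hle),
      arcsinpq_two_doublingMap h hs ((le_pCompl_iff hp0 hs).1 hle)]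
  · rw [min_eq_right ((hmono.le_iff_le hψ hs).2 hle), ← doublingMap_pCompl hp0 hs,
      arcsinpq_two_doublingMap h hψ
        ((le_pCompl_iff hp0 hψ).1 (by rwa [pCompl_pCompl hp0 hs]))]

lemma sinpq_two_mul_arcsinpq (hs : s ∈ Icc 0 1) :
    sinpq 2 p (2 ^ (2 / p) * arcsinpq r p s) = doublingMap p s := by
  have hp := h.symm.lt
  have hA := (bijOn_arcsinpq h.lt hp.le).mapsTo hs
  have hk : (0 : ℝ) ≤ 2 ^ (2 / p) := by positivity
  have hkA : 2 ^ (2 / p) * arcsinpq r p s ∈ Icc 0 (pipq 2 p) := by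
    rw [pipq_two_eq h]
    exact ⟨mul_nonneg hk hA.1, mul_le_mul_of_nonneg_left hA.2 hk⟩
  rw [sinpq_eq_sinHalf_min one_lt_two hp.le hkA, ← arcsinpq_two_doublingMap_eq_min h hs]
  exact (invOn_sinHalf one_lt_two hp.le).1 (doublingMap_mem_Icc h.symm.pos hs)

lemma cospq_rpow_sub_one (hx : x ∈ Ioc 0 (pipq r p / 2)) :
    cospq r p x ^ (r - 1) = pCompl p (sinpq r p x) := by
  have hr := h.lt
  have hp := h.symm.lt
  obtain hx2 | rfl := hx.2.lt_or_eq
  · have hsin := sinpq_mem_Icc hr hp.le (Ioc_subset_Icc_self hx)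
    rw [cospq_eq hr hp.le ⟨hx.1, hx2⟩, pCompl,
      ← rpow_mul (one_sub_rpow_mem_Icc h.symm.pos hsin).1]
    congr 1
    rw [one_div, one_div, ← h.one_sub_inv]
    field_simp
  · rw [cospq_pipq_div_two hr hp.le, zero_rpow h.sub_one_ne_zero,
      sinpq_eq_sinHalf hr hp.le (right_mem_Icc.2 (half_pos (pipq_pos hr hp.le)).le),
      sinHalf_pipq_div_two hr hp.le, pCompl_one h.symm.pos]

end HolderConjugate

/-- Multiple-angle formula: `sin_{2,p}(2^{2/p}x) = 2^{2/p} sin_{p*,p}(x) cos_{p*,p}(x)^{p*-1}`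
for `x ∈ [0, π_{p*,p}/2] = [0, 2^{-2/p}π_{2,p}]`, where `p* = p/(p-1)`. -/
theorem multiple_angle_sin (p : ℝ) (hp : 1 < p) :
    Set.Icc (0:ℝ) (pipq (p/(p-1)) p / 2) = Set.Icc (0:ℝ) ((2:ℝ) ^ (-(2/p)) * pipq 2 p) ∧
    ∀ x ∈ Set.Icc (0:ℝ) (pipq (p/(p-1)) p / 2),
      sinpq 2 p ((2:ℝ) ^ (2/p) * x)
        = (2:ℝ) ^ (2/p) * sinpq (p/(p-1)) p x * cospq (p/(p-1)) p x ^ (p/(p-1) - 1) := by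
  have h : (p / (p - 1)).HolderConjugate p := (Real.HolderConjugate.conjExponent hp).symm
  refine ⟨?_, fun x hx => ?_⟩
  · rw [pipq_two_eq h, ← mul_assoc, ← rpow_add two_pos, neg_add_cancel, rpow_zero, one_mul]
  calc sinpq 2 p (2 ^ (2 / p) * x)
      = sinpq 2 p (2 ^ (2 / p) * arcsinpq (p / (p - 1)) p (sinpq (p / (p - 1)) p x)) := by
        rw [arcsinpq_sinpq h.lt hp.le hx]
    _ = doublingMap p (sinpq (p / (p - 1)) p x) :=
        sinpq_two_mul_arcsinpq h (sinpq_mem_Icc h.lt hp.le hx)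
    _ = 2 ^ (2 / p) * sinpq (p / (p - 1)) p x
          * cospq (p / (p - 1)) p x ^ (p / (p - 1) - 1) := by
        obtain rfl | hx0 := hx.1.eq_or_lt
        · simp [doublingMap, sinpq_zero h.lt hp.le]
        · rw [cospq_rpow_sub_one h ⟨hx0, hx.2⟩, doublingMap]
end

section
/- Let p ∈ (1,∞) and let n be an integer with 2 ≤ n < p+1. Then ∏_{k=1}^{n−1} π_{p/(p−k), p} = n^{1−n/p} · ∏_{k=1}^{n−1} π_{n/(n−k), p}; equivalently, in terms of the Beta function, ∏_{k=1}^{n−1} B(k/p, 1/p) = n^{1−n/p} · ∏_{k=1}^{n−1} B(k/n, 1/p). -/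
open Real Set MeasureTheory Filter

/-- The real Beta function `B(x,y) = Γ(x)Γ(y)/Γ(x+y)`. -/
noncomputable def realBeta (x y : ℝ) : ℝ := Real.Gamma x * Real.Gamma y / Real.Gamma (x + y)

/-!
Substituting `u = t^q` turns `π_{p,q}` into `(2/q) B(1 - 1/p, 1/q)`, so the first identity is
`(2/p)^(n-1)` times the second. On the left of the Beta identity the product telescopes to
`Γ(1/p)^n / Γ(n/p)`; on the right it produces `∏_{k<n} Γ(1/p + k/n)`, which Gauss's
multiplication formula turns into `n^(1-n/p) Γ(n/p) ∏_{k=1}^{n-1} Γ(k/n)`. The multiplication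
formula follows from the Bohr–Mollerup theorem: `s ↦ n^(s-1) ∏_{k<n} Γ((s+k)/n)` is
log-convex and satisfies the functional equation of `Γ`, and normalising it at `s = 1` avoids
computing the constant `∏_{k=1}^{n-1} Γ(k/n)`.
-/

theorem convexOn_log_Gamma_mul_add {a b : ℝ} (ha : 0 < a) (hb : 0 ≤ b) :
    ConvexOn ℝ (Ioi 0) fun s => log (Gamma (a * s + b)) := by
  refine ((convexOn_log_Gamma.comp_affineMap (AffineMap.lineMap b (a + b))).subset ?_
    (convex_Ioi 0)).congr fun s _ => ?_
  · intro s (hs : 0 < s)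
    simp only [mem_preimage, AffineMap.lineMap_apply_ring', mem_Ioi]
    nlinarith
  · simp only [Function.comp_apply, AffineMap.lineMap_apply_ring']
    ring_nf

theorem convexOn_log_prod_Gamma_div_add {n : ℝ} (hn : 0 < n) (m : ℕ) :
    ConvexOn ℝ (Ioi 0) fun s => log (∏ k ∈ Finset.range m, Gamma (s / n + k / n)) := by
  induction m with
  | zero => simpa using convexOn_const (0 : ℝ) (convex_Ioi (0 : ℝ))
  | succ m ih =>
    refine (ih.add (convexOn_log_Gamma_mul_add (inv_pos.2 hn)
      (by positivity : 0 ≤ (m : ℝ) / n))).congr fun s (hs : 0 < s) => ?_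
    have hpos : ∀ k : ℕ, 0 < Gamma (s / n + k / n) := fun k => Gamma_pos_of_pos (by positivity)
    rw [Pi.add_apply, Finset.prod_range_succ, log_mul (Finset.prod_pos fun k _ => hpos k).ne'
      (hpos m).ne', div_eq_inv_mul s]

noncomputable def multiplicationGamma (n : ℕ) (s : ℝ) : ℝ :=
  (n : ℝ) ^ (s - 1) * ∏ k ∈ Finset.range n, Gamma (s / n + k / n)

section multiplicationGamma

variable {n : ℕ}

theorem multiplicationGamma_pos (hn : 0 < n) {s : ℝ} (hs : 0 < s) :
    0 < multiplicationGamma n s :=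
  mul_pos (rpow_pos_of_pos (by exact_mod_cast hn) _)
    (Finset.prod_pos fun k _ => Gamma_pos_of_pos (by positivity))

theorem convexOn_log_multiplicationGamma (hn : 0 < n) :
    ConvexOn ℝ (Ioi 0) (log ∘ multiplicationGamma n) := by
  have hn0 : (0 : ℝ) < n := by exact_mod_cast hn
  have hlog : 0 ≤ log n := log_nonneg (by exact_mod_cast hn)
  refine ((((convexOn_id (convex_Ioi 0)).smul hlog).add
    (convexOn_log_prod_Gamma_div_add hn0 n)).add_const (-log n)).congr fun s (hs : 0 < s) => ?_
  have hP : 0 < ∏ k ∈ Finset.range n, Gamma (s / n + k / n) :=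
    Finset.prod_pos fun k _ => Gamma_pos_of_pos (by positivity)
  rw [Function.comp_apply, multiplicationGamma, log_mul (rpow_pos_of_pos hn0 _).ne' hP.ne',
    log_rpow hn0]
  simp only [Pi.add_apply, smul_eq_mul, id]
  ring

theorem multiplicationGamma_add_one (hn : 0 < n) {s : ℝ} (hs : 0 < s) :
    multiplicationGamma n (s + 1) = s * multiplicationGamma n s := by
  have hn0 : (0 : ℝ) < n := by exact_mod_cast hn
  -- Shifting `s` by one shifts the factors by one: only `Γ(s/n)` is replaced by `Γ(s/n + 1)`.
  have hshift : ∏ k ∈ Finset.range n, Gamma ((s + 1) / n + k / n)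
      = s / n * ∏ k ∈ Finset.range n, Gamma (s / n + k / n) := by
    have h := Finset.prod_range_succ' (fun k : ℕ => Gamma (s / n + k / n)) n
    rw [Finset.prod_range_succ, div_self hn0.ne', Gamma_add_one (by positivity),
      Nat.cast_zero, zero_div, add_zero] at h
    have e : ∀ k : ℕ, (s + 1) / n + k / n = s / n + ((k + 1 : ℕ) : ℝ) / n := fun k => by
      push_cast; ring
    simp_rw [e]
    apply mul_right_cancel₀ (Gamma_pos_of_pos (by positivity : 0 < s / n)).ne'
    rw [← h]
    ring
  rw [multiplicationGamma, multiplicationGamma, hshift, add_sub_cancel_right,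
    rpow_sub_one hn0.ne']
  field_simp

theorem multiplicationGamma_one (n : ℕ) :
    multiplicationGamma n 1 = ∏ k ∈ Finset.range n, Gamma ((k + 1) / n) := by
  rw [multiplicationGamma, sub_self, rpow_zero, one_mul]
  exact Finset.prod_congr rfl fun k _ => by rw [← add_div, add_comm]

/-- **Gauss's multiplication formula**, with the constant `(2π)^((n-1)/2) / √n` left
unevaluated. -/
theorem multiplicationGamma_eq_Gamma_mul (hn : 0 < n) {s : ℝ} (hs : 0 < s) :
    multiplicationGamma n s = Gamma s * multiplicationGamma n 1 := by
  have hC := multiplicationGamma_pos hn one_pos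
  have h := eq_Gamma_of_log_convex
    (f := fun s => multiplicationGamma n s / multiplicationGamma n 1)
    (((convexOn_log_multiplicationGamma hn).add_const (-log (multiplicationGamma n 1))).congr
      fun s (hs : 0 < s) => by
        rw [Function.comp_apply, log_div (multiplicationGamma_pos hn hs).ne' hC.ne']
        rfl)
    (fun hs => by rw [multiplicationGamma_add_one hn hs, mul_div_assoc])
    (fun hs => div_pos (multiplicationGamma_pos hn hs) hC) (div_self hC.ne') hs
  rw [← h, div_mul_cancel₀ _ hC.ne']

end multiplicationGamma

theorem Finset.prod_Icc_one_eq_prod_range {M : Type*} [CommMonoid M] (f : ℕ → M) (m : ℕ) :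
    ∏ k ∈ Finset.Icc 1 m, f k = ∏ k ∈ Finset.range m, f (k + 1) := by
  rw [Finset.range_eq_Ico, Finset.prod_Ico_add', Finset.Ico_add_one_right_eq_Icc, zero_add]

theorem prod_realBeta_div_eq_Gamma_pow_div {p : ℝ} (hp : 0 < p) (m : ℕ) :
    ∏ k ∈ Finset.Icc 1 m, realBeta (k / p) (1 / p)
      = Gamma (1 / p) ^ (m + 1) / Gamma ((m + 1) / p) := by
  induction m with
  | zero => simp [(Gamma_pos_of_pos (inv_pos.2 hp)).ne']
  | succ m ih =>
    have hΓ : Gamma ((m + 1) / p) ≠ 0 := (Gamma_pos_of_pos (by positivity)).ne'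
    rw [Finset.prod_Icc_succ_top (by omega), ih, realBeta, ← add_div]
    push_cast
    field_simp
    ring

theorem prod_realBeta_div_eq_rpow_mul_prod {p : ℝ} (hp : 0 < p) {n : ℕ} (hn : 1 ≤ n) :
    ∏ k ∈ Finset.Icc 1 (n - 1), realBeta (k / p) (1 / p)
      = (n : ℝ) ^ (1 - n / p) * ∏ k ∈ Finset.Icc 1 (n - 1), realBeta (k / n) (1 / p) := by
  obtain ⟨m, rfl⟩ : ∃ m, n = m + 1 := ⟨n - 1, by omega⟩
  rw [Nat.add_sub_cancel, prod_realBeta_div_eq_Gamma_pow_div hp]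
  push_cast
  have hn0 : (0 : ℝ) < m + 1 := by positivity
  have hgauss := multiplicationGamma_eq_Gamma_mul (n := m + 1) (by omega) (s := (m + 1) / p)
    (by positivity)
  rw [multiplicationGamma, multiplicationGamma_one] at hgauss
  push_cast at hgauss
  rw [show ((m : ℝ) + 1) / p / (m + 1) = 1 / p by field_simp] at hgauss
  have hsplit : ∏ k ∈ Finset.range (m + 1), Gamma (1 / p + k / (m + 1))
      = Gamma (1 / p) * ∏ k ∈ Finset.Icc 1 m, Gamma (k / (m + 1) + 1 / p) := by
    rw [Finset.prod_range_succ', Finset.prod_Icc_one_eq_prod_range, mul_comm]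
    simp [add_comm]
  have hconst : ∏ k ∈ Finset.range (m + 1), Gamma ((k + 1) / (m + 1))
      = ∏ k ∈ Finset.Icc 1 m, Gamma (k / (m + 1)) := by
    rw [Finset.prod_range_succ, Finset.prod_Icc_one_eq_prod_range, div_self hn0.ne', Gamma_one,
      mul_one]
    push_cast
    rfl
  have hbeta : ∏ k ∈ Finset.Icc 1 m, realBeta (k / (m + 1)) (1 / p)
      = (∏ k ∈ Finset.Icc 1 m, Gamma (k / (m + 1))) * Gamma (1 / p) ^ m
        / ∏ k ∈ Finset.Icc 1 m, Gamma (k / (m + 1) + 1 / p) := by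
    simp only [realBeta, Finset.prod_div_distrib, Finset.prod_mul_distrib, Finset.prod_const,
      Nat.card_Icc, Nat.add_sub_cancel]
  rw [hsplit, hconst] at hgauss
  have hQ : 0 < ∏ k ∈ Finset.Icc 1 m, Gamma (k / (m + 1) + 1 / p) :=
    Finset.prod_pos fun k _ => Gamma_pos_of_pos (by positivity)
  have hG : 0 < Gamma ((m + 1) / p) := Gamma_pos_of_pos (by positivity)
  have hN : 0 < ((m : ℝ) + 1) ^ ((m + 1) / p - 1) := by positivity
  rw [hbeta, show 1 - ((m : ℝ) + 1) / p = -((m + 1) / p - 1) by ring, rpow_neg hn0.le,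
    div_eq_iff hG.ne', ← mul_div_assoc, inv_mul_eq_div, div_div, div_mul_eq_mul_div,
    eq_div_iff (by positivity)]
  linear_combination Gamma (1 / p) ^ m * hgauss
theorem realBeta_eq_integral {u v : ℝ} (hu : 0 < u) (hv : 0 < v) :
    realBeta u v = ∫ x in (0:ℝ)..1, x ^ (u - 1) * (1 - x) ^ (v - 1) := by
  have hB : Complex.betaIntegral u v
      = ((∫ x in (0:ℝ)..1, x ^ (u - 1) * (1 - x) ^ (v - 1) : ℝ) : ℂ) := by
    rw [Complex.betaIntegral, ← intervalIntegral.integral_ofReal]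
    refine intervalIntegral.integral_congr fun x hx => ?_
    rw [uIcc_of_le zero_le_one] at hx
    push_cast
    rw [Complex.ofReal_cpow hx.1, Complex.ofReal_cpow (sub_nonneg.2 hx.2)]
    push_cast
    ring
  have h := Complex.Gamma_mul_Gamma_eq_betaIntegral (s := u) (t := v) (by simpa) (by simpa)
  rw [hB, ← Complex.ofReal_add, Complex.Gamma_ofReal, Complex.Gamma_ofReal, Complex.Gamma_ofReal,
    ← Complex.ofReal_mul, ← Complex.ofReal_mul, Complex.ofReal_inj] at h
  rw [realBeta, h, mul_div_cancel_left₀ _ (Gamma_pos_of_pos (add_pos hu hv)).ne']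

theorem integral_one_sub_rpow_rpow {q a : ℝ} (hq : 0 < q) (ha : 0 < a) :
    ∫ t in (0:ℝ)..1, (1 - t ^ q) ^ (a - 1) = realBeta (1 / q) a / q := by
  -- substitute `u = t ^ q` on `(0, ∞)`, with both integrands cut off outside `(0, 1)`
  have hsub := integral_comp_rpow_Ioi_of_pos (g := (Ioo (0:ℝ) 1).indicator
    fun u => u ^ (1 / q - 1) * (1 - u) ^ (a - 1)) hq
  have hlhs : EqOn (fun x => (q * x ^ (q - 1)) • (Ioo (0:ℝ) 1).indicator
      (fun u => u ^ (1 / q - 1) * (1 - u) ^ (a - 1)) (x ^ q))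
      ((Ioo (0:ℝ) 1).indicator fun t => q * (1 - t ^ q) ^ (a - 1)) (Ioi 0) := by
    intro x (hx : 0 < x)
    have hmem : x ^ q ∈ Ioo (0:ℝ) 1 ↔ x ∈ Ioo (0:ℝ) 1 := by
      simp only [mem_Ioo, rpow_pos_of_pos hx, hx, rpow_lt_one_iff' hx.le hq, true_and]
    dsimp only
    by_cases hx1 : x ∈ Ioo (0:ℝ) 1
    · rw [indicator_of_mem (hmem.2 hx1), indicator_of_mem hx1, smul_eq_mul, ← rpow_mul hx.le,
        mul_sub, mul_one_div_cancel hq.ne', mul_one]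
      have : x ^ (q - 1) * x ^ (1 - q) = 1 := by
        rw [← rpow_add hx, sub_add_sub_cancel, sub_self, rpow_zero]
      linear_combination q * (1 - x ^ q) ^ (a - 1) * this
    · rw [indicator_of_notMem (mt hmem.1 hx1), indicator_of_notMem hx1, smul_zero]
  rw [setIntegral_congr_fun measurableSet_Ioi hlhs, setIntegral_indicator measurableSet_Ioo,
    setIntegral_indicator measurableSet_Ioo, Ioi_inter_Ioo, max_self, integral_const_mul,
    ← integral_Ioc_eq_integral_Ioo, ← integral_Ioc_eq_integral_Ioo,
    ← intervalIntegral.integral_of_le zero_le_one,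
    ← intervalIntegral.integral_of_le zero_le_one,
    ← realBeta_eq_integral (by positivity) ha] at hsub
  rw [← hsub]
  field_simp

theorem pipq_eq_realBeta {p q : ℝ} (hp : 1 < p) (hq : 0 < q) :
    pipq p q = 2 / q * realBeta (1 - 1 / p) (1 / q) := by
  have ha : 0 < 1 - 1 / p := by
    rw [sub_pos, div_lt_one (by linarith)]
    exact hp
  rw [pipq, arcsinpq, show -(1 / p) = 1 - 1 / p - 1 by ring, integral_one_sub_rpow_rpow hq ha,
    realBeta, realBeta, add_comm, mul_comm (Gamma _)]
  ring

theorem pipq_div_sub_eq_realBeta {p r k : ℝ} (hp : 0 < p) (hk : 0 < k) (hkr : k < r) :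
    pipq (r / (r - k)) p = 2 / p * realBeta (k / r) (1 / p) := by
  have hr : r ≠ 0 := (hk.trans hkr).ne'
  rw [pipq_eq_realBeta ((one_lt_div (by linarith)).2 (by linarith)) hp, one_div_div]
  congr 2
  field_simp
  ring

/-- For `2 ≤ n < p+1`:
`∏_{k=1}^{n-1} π_{p/(p-k),p} = n^{1-n/p} ∏_{k=1}^{n-1} π_{n/(n-k),p}`, equivalently
`∏_{k=1}^{n-1} B(k/p,1/p) = n^{1-n/p} ∏_{k=1}^{n-1} B(k/n,1/p)`. -/
theorem pi_product_formula (p : ℝ) (hp : 1 < p) (n : ℕ) (hn : 2 ≤ n) (hnp : (n : ℝ) < p + 1) :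
    (∏ k ∈ Finset.Icc 1 (n-1), pipq (p/(p-(k:ℝ))) p)
      = (n : ℝ) ^ (1 - (n:ℝ)/p) * ∏ k ∈ Finset.Icc 1 (n-1), pipq ((n:ℝ)/((n:ℝ)-(k:ℝ))) p ∧
    (∏ k ∈ Finset.Icc 1 (n-1), realBeta ((k:ℝ)/p) (1/p))
      = (n : ℝ) ^ (1 - (n:ℝ)/p) * ∏ k ∈ Finset.Icc 1 (n-1), realBeta ((k:ℝ)/(n:ℝ)) (1/p) := by
  have hp0 : 0 < p := by linarith
  have hbeta := prod_realBeta_div_eq_rpow_mul_prod hp0 (by omega : 1 ≤ n)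
  refine ⟨?_, hbeta⟩
  have hk : ∀ k ∈ Finset.Icc 1 (n - 1), (0 : ℝ) < k ∧ (k : ℝ) + 1 ≤ n := fun k hmem => by
    rw [Finset.mem_Icc] at hmem
    exact ⟨by exact_mod_cast hmem.1, by exact_mod_cast (by omega : k + 1 ≤ n)⟩
  rw [Finset.prod_congr rfl fun k hmem =>
      pipq_div_sub_eq_realBeta hp0 (hk k hmem).1 (by linarith [(hk k hmem).2]),
    Finset.prod_congr rfl fun k hmem =>
      pipq_div_sub_eq_realBeta hp0 (hk k hmem).1 (by linarith [(hk k hmem).2]),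
    Finset.prod_mul_distrib, Finset.prod_mul_distrib, hbeta]
  ring
end
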